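/- Let κ^s < η < 0 and s₁ ∈ ℝ. Suppose Φ: {(s,τ) : τ ≤ s ≤ s₁} → ℝ obeys |Φ(s,τ)| ≤ K e^{κ^s (s−τ)}, and δB: (−∞,s₁] → ℝ satisfies ∫_{−∞}^{s₁} δB(τ)² dτ ≤ R² and δB ≥ 0, and U: (−∞,s₁] → ℝ satisfies |U(τ)| ≤ M e^{−ητ}. Then for every s ≤ s₁, ∫_{−∞}^{s} |Φ(s,τ)| δB(τ) |U(τ)| dτ ≤ K M e^{−ηs} (1/(2(η − κ^s)) + R²). -/

import Mathlib

/-! Since `η ≤ 0`, the integrand is at most `K M e^{-ηs} · e^{(η-κ)(τ-s)} δB(τ)`, and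
`e^{x} y ≤ e^{2x} + y²` splits this into an exponential with integral `1/(2(η-κ))` over
`(-∞, s]` and `δB²`, whose integral is at most `R²`. -/

open MeasureTheory Real Set

theorem integrableOn_exp_mul_sub_Iic {b : ℝ} (hb : 0 < b) (s c : ℝ) :
    IntegrableOn (fun τ => exp (b * (τ - s))) (Iic c) := by
  simp only [sub_eq_add_neg, mul_add, mul_neg, exp_add]
  exact (integrableOn_exp_mul_Iic hb c).mul_const (exp (-(b * s)))

theorem integral_exp_mul_sub_Iic {b : ℝ} (hb : 0 < b) (s : ℝ) :
    ∫ τ in Iic s, exp (b * (τ - s)) = 1 / b := by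
  simp only [sub_eq_add_neg, mul_add, mul_neg, exp_add]
  rw [integral_mul_const, integral_exp_mul_Iic hb, div_mul_eq_mul_div, ← exp_add,
    add_neg_cancel, exp_zero]

theorem exp_mul_le_exp_two_mul_add_sq (x y : ℝ) : exp x * y ≤ exp (2 * x) + y ^ 2 := by
  have h : exp (2 * x) = exp x ^ 2 := by rw [sq, ← exp_add, two_mul]
  nlinarith [sq_nonneg (exp x - y / 2), sq_nonneg y]

theorem nonneg_of_abs_le_mul_exp {a K x : ℝ} (h : |a| ≤ K * exp x) : 0 ≤ K :=
  nonneg_of_mul_nonneg_left ((abs_nonneg a).trans h) (exp_pos x)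

theorem abs_mul_mul_abs_le_of_dichotomy {κ η K M s τ φ δ u : ℝ} (hη : η < 0) (hτs : τ ≤ s)
    (hδ : 0 ≤ δ) (hφ : |φ| ≤ K * exp (κ * (s - τ))) (hu : |u| ≤ M * exp (-η * τ)) :
    |φ| * δ * |u| ≤ K * M * exp (-η * s) * (exp (2 * (η - κ) * (τ - s)) + δ ^ 2) := by
  have hK := nonneg_of_abs_le_mul_exp hφ
  have hM := nonneg_of_abs_le_mul_exp hu
  have hexp : exp (κ * (s - τ)) * exp (-η * τ) = exp (-η * s) * exp ((κ + η) * (s - τ)) := by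
    rw [← exp_add, ← exp_add]; ring_nf
  calc |φ| * δ * |u| ≤ K * exp (κ * (s - τ)) * δ * (M * exp (-η * τ)) := by gcongr
    _ = K * M * exp (-η * s) * (exp ((κ + η) * (s - τ)) * δ) := by
      linear_combination K * M * δ * hexp
    _ ≤ K * M * exp (-η * s) * (exp ((η - κ) * (τ - s)) * δ) := by
      gcongr _ * (exp ?_ * _)
      nlinarith
    _ ≤ K * M * exp (-η * s) * (exp (2 * (η - κ) * (τ - s)) + δ ^ 2) := by
      gcongr
      rw [mul_assoc]
      exact exp_mul_le_exp_two_mul_add_sq _ _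

theorem stmt_12_general (s₁ κ η K M R : ℝ) (hκη : κ < η) (hη : η < 0)
    (Φ : ℝ → ℝ → ℝ) (δB U : ℝ → ℝ)
    (hΦ : ∀ s τ, τ ≤ s → s ≤ s₁ → |Φ s τ| ≤ K * Real.exp (κ * (s - τ)))
    (hδB : ∀ τ, 0 ≤ δB τ)
    (hδBL2 : IntegrableOn (fun τ => (δB τ)^2) (Set.Iic s₁))
    (hδBbd : ∫ τ in Set.Iic s₁, (δB τ)^2 ≤ R^2)
    (hU : ∀ τ, τ ≤ s₁ → |U τ| ≤ M * Real.exp (-η * τ)) :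
    ∀ s ≤ s₁,
      ∫ τ in Set.Iic s, |Φ s τ| * δB τ * |U τ|
        ≤ K * M * Real.exp (-η * s) * (1 / (2 * (η - κ)) + R^2) := by
  intro s hs
  have hb : 0 < 2 * (η - κ) := by linarith
  have hδBs : IntegrableOn (fun τ => (δB τ)^2) (Iic s) := hδBL2.mono_set (Iic_subset_Iic.mpr hs)
  have hK := nonneg_of_abs_le_mul_exp (hΦ s s le_rfl hs)
  have hM := nonneg_of_abs_le_mul_exp (hU s hs)
  have hδBs_le : ∫ τ in Iic s, (δB τ)^2 ≤ R^2 :=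
    (setIntegral_mono_set hδBL2 (.of_forall fun τ => by positivity)
      (Iic_subset_Iic.mpr hs).eventuallyLE).trans hδBbd
  calc ∫ τ in Iic s, |Φ s τ| * δB τ * |U τ|
      ≤ ∫ τ in Iic s, K * M * exp (-η * s) * (exp (2 * (η - κ) * (τ - s)) + δB τ ^ 2) := by
        refine integral_mono_of_nonneg (.of_forall fun τ => by have := hδB τ; positivity)
          (((integrableOn_exp_mul_sub_Iic hb s s).add hδBs).const_mul _) ?_
        filter_upwards [ae_restrict_mem measurableSet_Iic] with τ (hτ : τ ≤ s)
        exact abs_mul_mul_abs_le_of_dichotomy hη hτ (hδB τ) (hΦ s τ hτ hs) (hU τ (hτ.trans hs))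
    _ = K * M * exp (-η * s) * (1 / (2 * (η - κ)) + ∫ τ in Iic s, δB τ ^ 2) := by
        rw [integral_const_mul, integral_add (integrableOn_exp_mul_sub_Iic hb s s) hδBs,
          integral_exp_mul_sub_Iic hb]
    _ ≤ K * M * exp (-η * s) * (1 / (2 * (η - κ)) + R^2) := by gcongr

/-- Scalar dichotomy convolution estimate: if `|Φ(s,τ)| ≤ K e^{κ(s-τ)}` with
`κ < η < 0`, `δB ≥ 0` with `∫_{-∞}^{s₁} δB² ≤ R²`, and `|U(τ)| ≤ M e^{-ητ}`,
then for every `s ≤ s₁`,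
`∫_{-∞}^{s} |Φ(s,τ)| δB(τ) |U(τ)| dτ ≤ K M e^{-ηs} (1/(2(η-κ)) + R²)`. -/
theorem stmt_12 (s₁ κ η K M R : ℝ) (hκη : κ < η) (hη : η < 0)
    (Φ : ℝ → ℝ → ℝ) (δB U : ℝ → ℝ)
    (hΦm : ∀ s, Measurable (Φ s)) (hδBm : Measurable δB) (hUm : Measurable U)
    (hΦ : ∀ s τ, τ ≤ s → s ≤ s₁ → |Φ s τ| ≤ K * Real.exp (κ * (s - τ)))
    (hδB : ∀ τ, 0 ≤ δB τ)
    (hδBL2 : IntegrableOn (fun τ => (δB τ)^2) (Set.Iic s₁))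
    (hδBbd : ∫ τ in Set.Iic s₁, (δB τ)^2 ≤ R^2)
    (hU : ∀ τ, τ ≤ s₁ → |U τ| ≤ M * Real.exp (-η * τ)) :
    ∀ s ≤ s₁,
      ∫ τ in Set.Iic s, |Φ s τ| * δB τ * |U τ|
        ≤ K * M * Real.exp (-η * s) * (1 / (2 * (η - κ)) + R^2) :=
  stmt_12_general s₁ κ η K M R hκη hη Φ δB U hΦ hδB hδBL2 hδBbd hU
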